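/- Let α ∈ (0,1] and let D_α^E have the distribution P(D = 0) = 1 - α/2, P(D = k) = α⁻¹ ∫₀^α (α - t) e^{-t}(1 - e^{-t})^{k-1} dt for k ≥ 1. Then Var(D_α^E) = ((α-2)/2)·((e^α - 1)/α)² + 2(e^α - 1)/α - 1. -/

import Mathlib

/-!
Conditionally on a time `t ∈ [0, α]` with sub-probability density `(α - t) / α`, the law of
`D_α^E` on `k ≥ 1` is geometric with success probability `e^{-t}`, whose first two moments are
`e^t` and `2 e^{2t} - e^t`. All terms being nonnegative, summation and integration commute, so
`E[D] = α⁻¹ ∫₀^α (α - t) e^t dt = (e^α - 1 - α) / α` and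
`E[D²] = α⁻¹ ∫₀^α (α - t) (2 e^{2t} - e^t) dt = (e^α - 1)² / (2α)`.
-/

open Real MeasureTheory ProbabilityTheory

section Geometric

variable {𝕜 : Type*} [NormedField 𝕜] {x p : 𝕜}

lemma hasSum_nat_mul_pow_sub_one (hx : ‖x‖ < 1) :
    HasSum (fun k : ℕ => (k : 𝕜) * x ^ (k - 1)) (1 / (1 - x) ^ 2) := by
  refine (hasSum_nat_add_iff' 1).mp ?_
  simpa using hasSum_choose_mul_geometric_of_norm_lt_one 1 hx

lemma hasSum_nat_sq_mul_pow_sub_one (hx : ‖x‖ < 1) :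
    HasSum (fun k : ℕ => (k : 𝕜) ^ 2 * x ^ (k - 1)) ((1 + x) / (1 - x) ^ 3) := by
  have hx1 : 1 - x ≠ 0 := sub_ne_zero.mpr (ne_of_apply_ne norm (by simpa using hx.ne'))
  refine (hasSum_nat_add_iff' 1).mp ?_
  -- `(n + 1)² = 2 (n + 2).choose 2 - (n + 1).choose 1`
  convert ((hasSum_choose_mul_geometric_of_norm_lt_one 2 hx).mul_left 2).sub
    (hasSum_choose_mul_geometric_of_norm_lt_one 1 hx) using 1
  · ext n
    have hchoose : ((n + 2).choose 2 : 𝕜) * 2 = (n + 2) * (n + 1) := by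
      have h : (n + 2).choose 2 * 2 = (n + 2) * (n + 1) :=
        (Nat.add_one_mul_choose_eq (n + 1) 1).symm.trans (by rw [Nat.choose_one_right])
      simpa using congrArg (Nat.cast : ℕ → 𝕜) h
    simp only [Nat.choose_one_right]
    push_cast
    linear_combination -x ^ n * hchoose
  · rw [Finset.sum_range_one]
    field_simp
    ring

lemma ne_zero_of_norm_one_sub_lt_one (hp : ‖1 - p‖ < 1) : p ≠ 0 := by
  rintro rfl
  simp at hp

lemma hasSum_nat_mul_geometric (hp : ‖1 - p‖ < 1) :
    HasSum (fun k : ℕ => (k : 𝕜) * (p * (1 - p) ^ (k - 1))) p⁻¹ := by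
  have hp0 := ne_zero_of_norm_one_sub_lt_one hp
  have h := (hasSum_nat_mul_pow_sub_one hp).mul_left p
  rw [sub_sub_cancel, show p * (1 / p ^ 2) = p⁻¹ by field_simp] at h
  exact h.congr_fun fun k => by ring

lemma hasSum_nat_sq_mul_geometric (hp : ‖1 - p‖ < 1) :
    HasSum (fun k : ℕ => (k : 𝕜) ^ 2 * (p * (1 - p) ^ (k - 1))) ((2 - p) / p ^ 2) := by
  have hp0 := ne_zero_of_norm_one_sub_lt_one hp
  have h := (hasSum_nat_sq_mul_pow_sub_one hp).mul_left p
  rw [sub_sub_cancel, show p * ((1 + (1 - p)) / p ^ 3) = (2 - p) / p ^ 2 by field_simp; ring] at h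
  exact h.congr_fun fun k => by ring

end Geometric

lemma norm_one_sub_exp_neg_lt_one {t : ℝ} (ht : 0 ≤ t) : ‖1 - exp (-t)‖ < 1 := by
  rw [Real.norm_eq_abs, abs_lt]
  constructor <;> nlinarith [exp_pos (-t), exp_le_one_iff.mpr (neg_nonpos.mpr ht)]

lemma hasSum_nat_mul_exp_neg_geometric {t : ℝ} (ht : 0 ≤ t) :
    HasSum (fun k : ℕ => (k : ℝ) * (exp (-t) * (1 - exp (-t)) ^ (k - 1))) (exp t) := by
  simpa [exp_neg] using hasSum_nat_mul_geometric (norm_one_sub_exp_neg_lt_one ht)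

lemma hasSum_nat_sq_mul_exp_neg_geometric {t : ℝ} (ht : 0 ≤ t) :
    HasSum (fun k : ℕ => (k : ℝ) ^ 2 * (exp (-t) * (1 - exp (-t)) ^ (k - 1)))
      (2 * exp (2 * t) - exp t) := by
  have h := hasSum_nat_sq_mul_geometric (norm_one_sub_exp_neg_lt_one ht)
  rwa [show (2 - exp (-t)) / exp (-t) ^ 2 = 2 * exp (2 * t) - exp t by
    rw [exp_neg, show 2 * t = t + t by ring, exp_add]; field_simp] at h

lemma integral_sub_mul_exp_mul {c : ℝ} (hc : c ≠ 0) (α : ℝ) :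
    ∫ t in (0:ℝ)..α, (α - t) * exp (c * t) = (exp (c * α) - 1 - c * α) / c ^ 2 := by
  have hderiv : ∀ t ∈ Set.uIcc 0 α, HasDerivAt (fun t => ((α - t) / c + 1 / c ^ 2) * exp (c * t))
      ((α - t) * exp (c * t)) t := by
    intro t _
    have h : HasDerivAt (fun t => ((α - t) / c + 1 / c ^ 2) * exp (c * t)) _ t :=
      ((((hasDerivAt_id t).const_sub α).div_const c).add_const (1 / c ^ 2)).mul
        ((hasDerivAt_id t).const_mul c).exp
    convert h using 1
    simp only [id]
    field_simp
    ring
  rw [intervalIntegral.integral_eq_sub_of_hasDerivAt hderiv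
    (Continuous.intervalIntegrable (by fun_prop) _ _)]
  simp only [sub_self, zero_div, zero_add, mul_zero, exp_zero, sub_zero, mul_one]
  field_simp
  ring

lemma integral_sub_mul_exp (α : ℝ) : ∫ t in (0:ℝ)..α, (α - t) * exp t = exp α - 1 - α := by
  simpa using integral_sub_mul_exp_mul one_ne_zero α

lemma integral_sub_mul_two_mul_exp_two_mul_sub_exp (α : ℝ) :
    ∫ t in (0:ℝ)..α, (α - t) * (2 * exp (2 * t) - exp t) = (exp α - 1) ^ 2 / 2 := by
  calc ∫ t in (0:ℝ)..α, (α - t) * (2 * exp (2 * t) - exp t)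
      = 2 * (∫ t in (0:ℝ)..α, (α - t) * exp (2 * t)) - ∫ t in (0:ℝ)..α, (α - t) * exp t := by
        rw [← intervalIntegral.integral_const_mul, ← intervalIntegral.integral_sub
          (Continuous.intervalIntegrable (by fun_prop) _ _)
          (Continuous.intervalIntegrable (by fun_prop) _ _)]
        congr 1 with t
        ring
    _ = (exp α - 1) ^ 2 / 2 := by
        rw [integral_sub_mul_exp_mul two_ne_zero, integral_sub_mul_exp,
          show 2 * α = α + α by ring, exp_add]
        ring

theorem intervalIntegral.hasSum_integral_of_nonneg {ι : Type*} [Countable ι] {μ : Measure ℝ}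
    {a b : ℝ} {F : ι → ℝ → ℝ} {f : ℝ → ℝ}
    (hF : ∀ n, AEStronglyMeasurable (F n) (μ.restrict (Set.uIoc a b)))
    (hF_nonneg : ∀ n, ∀ t ∈ Set.uIoc a b, 0 ≤ F n t) (hf : IntervalIntegrable f μ a b)
    (h_lim : ∀ t ∈ Set.uIoc a b, HasSum (fun n => F n t) (f t)) :
    HasSum (fun n => ∫ t in a..b, F n t ∂μ) (∫ t in a..b, f t ∂μ) := by
  refine intervalIntegral.hasSum_integral_of_dominated_convergence F hF
    (fun n => ae_of_all _ fun t ht => (Real.norm_of_nonneg (hF_nonneg n t ht)).le)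
    (ae_of_all _ fun t ht => (h_lim t ht).summable)
    ((intervalIntegrable_congr fun t ht => (h_lim t ht).tsum_eq.symm).mp hf) (ae_of_all _ h_lim)

section Countable

variable {X : Type*} [MeasurableSpace X] [Countable X] [MeasurableSingletonClass X]
  {μ : Measure X} [IsFiniteMeasure μ] {f : X → ℝ} {m : ℝ}

lemma integrable_of_hasSum_measureReal_mul (hf : 0 ≤ f)
    (h : HasSum (fun x => μ.real {x} * f x) m) : Integrable f μ := by
  rw [← Measure.sum_smul_dirac μ]
  refine integrable_sum_dirac (fun _ => measure_ne_top _ _) ?_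
  simp only [Real.norm_of_nonneg (hf _)]
  exact h.summable

lemma integral_eq_of_hasSum_measureReal_mul (hf : 0 ≤ f)
    (h : HasSum (fun x => μ.real {x} * f x) m) : ∫ x, f x ∂μ = m := by
  rw [integral_countable (integrable_of_hasSum_measureReal_mul hf h)]
  exact h.tsum_eq

end Countable

lemma hasSum_measureReal_mul_of_mixture {α : ℝ} (hα : 0 ≤ α) {μ : Measure ℕ}
    (hk : ∀ k : ℕ, 1 ≤ k → μ.real {k} = α⁻¹ * ∫ t in (0:ℝ)..α,
      (α - t) * exp (-t) * (1 - exp (-t)) ^ (k - 1))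
    {w : ℕ → ℝ} {S : ℝ → ℝ} (hw_zero : w 0 = 0) (hw : 0 ≤ w) (hS : Continuous S)
    (hS_sum : ∀ t, 0 ≤ t → HasSum (fun k => w k * (exp (-t) * (1 - exp (-t)) ^ (k - 1))) (S t)) :
    HasSum (fun k => μ.real {k} * w k) (α⁻¹ * ∫ t in (0:ℝ)..α, (α - t) * S t) := by
  have hterm : ∀ k, μ.real {k} * w k =
      α⁻¹ * ∫ t in (0:ℝ)..α, (α - t) * (w k * (exp (-t) * (1 - exp (-t)) ^ (k - 1))) := by
    intro k
    rcases Nat.eq_zero_or_pos k with rfl | hk1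
    · simp [hw_zero]
    · rw [hk k hk1, mul_assoc, ← intervalIntegral.integral_mul_const]
      congr 2 with t
      ring
  simp only [hterm]
  refine (intervalIntegral.hasSum_integral_of_nonneg (fun k => ?_) (fun k t ht => ?_)
    (Continuous.intervalIntegrable (by fun_prop) _ _) (fun t ht => ?_)).mul_left α⁻¹
  · exact Continuous.aestronglyMeasurable (by fun_prop)
  · rw [Set.uIoc_of_le hα] at ht
    have hx : 0 ≤ 1 - exp (-t) := sub_nonneg.mpr (exp_le_one_iff.mpr (by linarith [ht.1]))
    exact mul_nonneg (sub_nonneg.mpr ht.2) (mul_nonneg (hw k) (by positivity))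
  · rw [Set.uIoc_of_le hα] at ht
    exact (hS_sum t ht.1.le).mul_left (α - t)

theorem stmt_6_general (α : ℝ) (hα : α ∈ Set.Ioc (0:ℝ) 1)
    (μ : Measure ℕ) [IsProbabilityMeasure μ]
    (hk : ∀ k : ℕ, 1 ≤ k →
      (μ {k}).toReal = α⁻¹ * ∫ t in (0:ℝ)..α,
        (α - t) * Real.exp (-t) * (1 - Real.exp (-t)) ^ (k - 1)) :
    variance (fun k : ℕ => (k : ℝ)) μ =
      (α - 2) / 2 * ((Real.exp α - 1) / α) ^ 2 + 2 * (Real.exp α - 1) / α - 1 := by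
  have hα0 : 0 < α := hα.1
  have hmean : HasSum (fun k => μ.real {k} * k) (α⁻¹ * (exp α - 1 - α)) := by
    have h := hasSum_measureReal_mul_of_mixture hα0.le hk (w := fun k => (k : ℝ))
      (by simp) (fun k => k.cast_nonneg) continuous_exp fun _ => hasSum_nat_mul_exp_neg_geometric
    simpa [integral_sub_mul_exp] using h
  have hsq : HasSum (fun k => μ.real {k} * (k : ℝ) ^ 2) (α⁻¹ * ((exp α - 1) ^ 2 / 2)) := by
    have h := hasSum_measureReal_mul_of_mixture hα0.le hk (w := fun k => (k : ℝ) ^ 2)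
      (by simp) (fun k => by positivity) (by fun_prop)
      fun _ => hasSum_nat_sq_mul_exp_neg_geometric
    rwa [integral_sub_mul_two_mul_exp_two_mul_sub_exp] at h
  have hsq_int : Integrable (fun k : ℕ => (k : ℝ) ^ 2) μ :=
    integrable_of_hasSum_measureReal_mul (fun k => by positivity) hsq
  rw [variance_eq_sub ((memLp_two_iff_integrable_sq (by fun_prop)).2 hsq_int),
    show μ[(fun k : ℕ => (k : ℝ)) ^ 2] = ∫ k, (k : ℝ) ^ 2 ∂μ from rfl,
    integral_eq_of_hasSum_measureReal_mul (fun k => by positivity) hsq,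
    integral_eq_of_hasSum_measureReal_mul (fun k => k.cast_nonneg) hmean]
  field_simp
  ring

/-- The variance of the limiting displacement `D_α^E` for early-insertion coalesced
hashing: `Var(D_α^E) = ((α-2)/2)((e^α-1)/α)² + 2(e^α-1)/α - 1`. -/
theorem stmt_6 (α : ℝ) (hα : α ∈ Set.Ioc (0:ℝ) 1)
    (μ : Measure ℕ) [IsProbabilityMeasure μ]
    (h0 : (μ {0}).toReal = 1 - α / 2)
    (hk : ∀ k : ℕ, 1 ≤ k →
      (μ {k}).toReal = α⁻¹ * ∫ t in (0:ℝ)..α,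
        (α - t) * Real.exp (-t) * (1 - Real.exp (-t)) ^ (k - 1)) :
    variance (fun k : ℕ => (k : ℝ)) μ =
      (α - 2) / 2 * ((Real.exp α - 1) / α) ^ 2 + 2 * (Real.exp α - 1) / α - 1 :=
  stmt_6_general α hα μ hk
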